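/- arXiv:2008.04026 — 2 statements merged into one kernel-verified Lean document; each statement's English description precedes it below -/
import Mathlib

section
/- In a multiplicative Hom-Jordan superalgebra (A,∘,α), with left-multiplication operators L(x)(w) = x∘w and L(x,y) = L(α(x))L(y) - (-1)^{|x||y|}L(α(y))L(x), the graded cyclic sum ↻_{w,x,z} (-1)^{|w|(|x|+|z|)} L(α(x), w∘z) ∘ α = 0 holds as an operator identity for all homogeneous w,x,z. -/
def sgn (K : Type*) [Field K] (i j : ZMod 2) : K := (-1 : K) ^ (i * j).val

def IsBilin (K : Type*) {A : Type*} [Field K] [AddCommGroup A] [Module K A]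
    (f : A → A → A) : Prop :=
  (∀ (c : K) (x y : A), f (c • x) y = c • f x y) ∧
  (∀ x x' y : A, f (x + x') y = f x y + f x' y) ∧
  (∀ (c : K) (x y : A), f x (c • y) = c • f x y) ∧
  (∀ x y y' : A, f x (y + y') = f x y + f x y')

def IsTrilin (K : Type*) {A : Type*} [Field K] [AddCommGroup A] [Module K A]
    (f : A → A → A → A) : Prop :=
  (∀ (c : K) (x y z : A), f (c • x) y z = c • f x y z) ∧
  (∀ x x' y z : A, f (x + x') y z = f x y z + f x' y z) ∧
  (∀ (c : K) (x y z : A), f x (c • y) z = c • f x y z) ∧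
  (∀ x y y' z : A, f x (y + y') z = f x y z + f x y' z) ∧
  (∀ (c : K) (x y z : A), f x y (c • z) = c • f x y z) ∧
  (∀ x y z z' : A, f x y (z + z') = f x y z + f x y z')

def asc {A : Type*} [AddCommGroup A] (mul : A → A → A) (x y z : A) : A :=
  mul (mul x y) z - mul x (mul y z)

def hasc {A : Type*} [AddCommGroup A] (mul : A → A → A) (α : A → A) (x y z : A) : A :=
  mul (mul x y) (α z) - mul (α x) (mul y z)

def br (K : Type*) {A : Type*} [Field K] [AddCommGroup A] [Module K A]
    (mul : A → A → A) (i j : ZMod 2) (x y : A) : A :=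
  (2 : K)⁻¹ • (mul x y - sgn K i j • mul y x)

def jp (K : Type*) {A : Type*} [Field K] [AddCommGroup A] [Module K A]
    (mul : A → A → A) (i j : ZMod 2) (x y : A) : A :=
  (2 : K)⁻¹ • (mul x y + sgn K i j • mul y x)

/-! For homogeneous `y`, supercommutativity turns each term `L(α a, b)(α y)` of the cyclic sum
into a signed Hom-associator `as(b, α y, α a)`, and the three associators obtained are exactly
those of the Hom-Jordan superidentity at `(w, z, y, x)`. All three signs differ from the Jordan
ones by the same factor `(-1)^{|w||x| + |x||z| + |z||w|}`, so the cyclic sum is that factor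
times zero. The general case follows by additivity in `y`. -/

lemma ZMod.two_cases : ∀ i : ZMod 2, i = 0 ∨ i = 1 := by decide

section Sign

variable {K : Type*} [Field K]

@[simp] lemma sgn_zero_left (j : ZMod 2) : sgn K 0 j = 1 := by simp [sgn]

@[simp] lemma sgn_zero_right (i : ZMod 2) : sgn K i 0 = 1 := by simp [sgn]

@[simp] lemma sgn_one_one : sgn K 1 1 = -1 := pow_one _

lemma sgn_add_right (i j k : ZMod 2) : sgn K i (j + k) = sgn K i j * sgn K i k := by
  rcases ZMod.two_cases i with rfl | rfl <;> rcases ZMod.two_cases j with rfl | rfl <;>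
    rcases ZMod.two_cases k with rfl | rfl <;> simp [show (1 + 1 : ZMod 2) = 0 from rfl]

lemma sgn_mul_sgn_add_add (i j k l : ZMod 2) :
    sgn K i (j + k) * sgn K j (i + k + l) =
      sgn K i j * sgn K j k * sgn K k i * sgn K j (i + l) := by
  rcases ZMod.two_cases i with rfl | rfl <;> rcases ZMod.two_cases j with rfl | rfl <;>
    rcases ZMod.two_cases k with rfl | rfl <;> rcases ZMod.two_cases l with rfl | rfl <;>
    simp [show (1 + 1 : ZMod 2) = 0 from rfl]

end Sign

section HomJordan

variable {K A : Type*} [Field K] [AddCommGroup A] [Module K A]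
  {𝒜 : ZMod 2 → Submodule K A} {mul : A → A → A} {α : A → A}

lemma hom_L_apply_eq_sgn_smul_hasc
    (hsmul : ∀ (c : K) (x y : A), mul x (c • y) = c • mul x y)
    (hgr : ∀ (i j : ZMod 2) (x y : A), x ∈ 𝒜 i → y ∈ 𝒜 j → mul x y ∈ 𝒜 (i + j))
    (hαeven : ∀ (i : ZMod 2) (x : A), x ∈ 𝒜 i → α x ∈ 𝒜 i)
    (hcomm : ∀ (i j : ZMod 2) (x y : A), x ∈ 𝒜 i → y ∈ 𝒜 j →
      mul x y = sgn K i j • mul y x)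
    {p q l : ZMod 2} {a b y : A} (ha : a ∈ 𝒜 p) (hb : b ∈ 𝒜 q) (hy : y ∈ 𝒜 l) :
    mul (α (α a)) (mul b (α y)) - sgn K p q • mul (α b) (mul (α a) (α y)) =
      sgn K p (q + l) • hasc mul α b (α y) (α a) := by
  have hαa := hαeven p a ha
  have hαy := hαeven l y hy
  rw [hcomm p (q + l) _ _ (hαeven p _ hαa) (hgr q l _ _ hb hαy), hcomm p l _ _ hαa hαy,
    hsmul, smul_smul, ← sgn_add_right, hasc, smul_sub]

lemma cyclic_sum_hom_L_eq_zero_of_homogeneous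
    (hsmul : ∀ (c : K) (x y : A), mul x (c • y) = c • mul x y)
    (hgr : ∀ (i j : ZMod 2) (x y : A), x ∈ 𝒜 i → y ∈ 𝒜 j → mul x y ∈ 𝒜 (i + j))
    (hαeven : ∀ (i : ZMod 2) (x : A), x ∈ 𝒜 i → α x ∈ 𝒜 i)
    (hcomm : ∀ (i j : ZMod 2) (x y : A), x ∈ 𝒜 i → y ∈ 𝒜 j →
      mul x y = sgn K i j • mul y x)
    (hjordan : ∀ (i j k l : ZMod 2) (x y z t : A),
      x ∈ 𝒜 i → y ∈ 𝒜 j → z ∈ 𝒜 k → t ∈ 𝒜 l →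
      sgn K l (i + k) • hasc mul α (mul x y) (α z) (α t)
        + sgn K i (j + k) • hasc mul α (mul y t) (α z) (α x)
        + sgn K j (l + k) • hasc mul α (mul t x) (α z) (α y) = 0)
    {i j k l : ZMod 2} {w x z y : A}
    (hw : w ∈ 𝒜 i) (hx : x ∈ 𝒜 j) (hz : z ∈ 𝒜 k) (hy : y ∈ 𝒜 l) :
    sgn K i (j + k) •
        (mul (α (α x)) (mul (mul w z) (α y))
          - sgn K j (i + k) • mul (α (mul w z)) (mul (α x) (α y)))
      + sgn K j (k + i) •
        (mul (α (α z)) (mul (mul x w) (α y))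
          - sgn K k (j + i) • mul (α (mul x w)) (mul (α z) (α y)))
      + sgn K k (i + j) •
        (mul (α (α w)) (mul (mul z x) (α y))
          - sgn K i (k + j) • mul (α (mul z x)) (mul (α w) (α y))) = 0 := by
  have hjordan' := hjordan i k l j w z y x hw hz hy hx
  rw [hom_L_apply_eq_sgn_smul_hasc hsmul hgr hαeven hcomm hx (hgr i k _ _ hw hz) hy,
    hom_L_apply_eq_sgn_smul_hasc hsmul hgr hαeven hcomm hz (hgr j i _ _ hx hw) hy,
    hom_L_apply_eq_sgn_smul_hasc hsmul hgr hαeven hcomm hw (hgr k j _ _ hz hx) hy,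
    smul_smul, smul_smul, smul_smul, sgn_mul_sgn_add_add, sgn_mul_sgn_add_add,
    sgn_mul_sgn_add_add]
  linear_combination (norm := module) (sgn K i j * sgn K j k * sgn K k i) • hjordan'

end HomJordan

theorem stmt14_general {K A : Type*} [Field K] [AddCommGroup A] [Module K A]
    (𝒜 : ZMod 2 → Submodule K A) (hds : DirectSum.IsInternal 𝒜)
    (mul : A → A → A) (hbil : IsBilin K mul)
    (hgr : ∀ (i j : ZMod 2) (x y : A), x ∈ 𝒜 i → y ∈ 𝒜 j → mul x y ∈ 𝒜 (i + j))
    (α : A → A)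
    (hαadd : ∀ x y : A, α (x + y) = α x + α y)
    (hαeven : ∀ (i : ZMod 2) (x : A), x ∈ 𝒜 i → α x ∈ 𝒜 i)
    (hcomm : ∀ (i j : ZMod 2) (x y : A), x ∈ 𝒜 i → y ∈ 𝒜 j →
      mul x y = sgn K i j • mul y x)
    (hjordan : ∀ (i j k l : ZMod 2) (x y z t : A),
      x ∈ 𝒜 i → y ∈ 𝒜 j → z ∈ 𝒜 k → t ∈ 𝒜 l →
      sgn K l (i + k) • hasc mul α (mul x y) (α z) (α t)
        + sgn K i (j + k) • hasc mul α (mul y t) (α z) (α x)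
        + sgn K j (l + k) • hasc mul α (mul t x) (α z) (α y) = 0)
    (i j k : ZMod 2) (w x z : A)
    (hw : w ∈ 𝒜 i) (hx : x ∈ 𝒜 j) (hz : z ∈ 𝒜 k) (y : A) :
    sgn K i (j + k) •
        (mul (α (α x)) (mul (mul w z) (α y))
          - sgn K j (i + k) • mul (α (mul w z)) (mul (α x) (α y)))
      + sgn K j (k + i) •
        (mul (α (α z)) (mul (mul x w) (α y))
          - sgn K k (j + i) • mul (α (mul x w)) (mul (α z) (α y)))
      + sgn K k (i + j) •
        (mul (α (α w)) (mul (mul z x) (α y))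
          - sgn K i (k + j) • mul (α (mul z x)) (mul (α w) (α y))) = 0 := by
  have hy : y ∈ ⨆ l, 𝒜 l := hds.submodule_iSup_eq_top ▸ Submodule.mem_top
  induction hy using Submodule.iSup_induction' with
  | mem l v hv =>
    exact cyclic_sum_hom_L_eq_zero_of_homogeneous hbil.2.2.1 hgr hαeven hcomm hjordan
      hw hx hz hv
  | zero =>
    have hα0 : α 0 = 0 := (AddMonoidHom.mk' α hαadd).map_zero
    have hmul0 (a : A) : mul a 0 = 0 := (AddMonoidHom.mk' (mul a) (hbil.2.2.2 a)).map_zero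
    simp only [hα0, hmul0, smul_zero, sub_zero, add_zero]
  | add a b _ _ ha hb =>
    simp only [hαadd, hbil.2.2.2] at ha hb ⊢
    linear_combination (norm := module) ha + hb

/-- Lemma 7.2: the operator identity
`↻_{w,x,z} (-1)^{|w|(|x|+|z|)} L(α(x), w∘z) ∘ α = 0`
in a multiplicative Hom-Jordan superalgebra, evaluated at an arbitrary `y`. -/
theorem stmt14 {K A : Type*} [Field K] [AddCommGroup A] [Module K A]
    (h2 : (2 : K) ≠ 0) (h3 : (3 : K) ≠ 0)
    (𝒜 : ZMod 2 → Submodule K A) (hds : DirectSum.IsInternal 𝒜)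
    (mul : A → A → A) (hbil : IsBilin K mul)
    (hgr : ∀ (i j : ZMod 2) (x y : A), x ∈ 𝒜 i → y ∈ 𝒜 j → mul x y ∈ 𝒜 (i + j))
    (α : A → A)
    (hαsmul : ∀ (c : K) (x : A), α (c • x) = c • α x)
    (hαadd : ∀ x y : A, α (x + y) = α x + α y)
    (hαeven : ∀ (i : ZMod 2) (x : A), x ∈ 𝒜 i → α x ∈ 𝒜 i)
    (hαmul : ∀ x y : A, α (mul x y) = mul (α x) (α y))
    (hcomm : ∀ (i j : ZMod 2) (x y : A), x ∈ 𝒜 i → y ∈ 𝒜 j →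
      mul x y = sgn K i j • mul y x)
    (hjordan : ∀ (i j k l : ZMod 2) (x y z t : A),
      x ∈ 𝒜 i → y ∈ 𝒜 j → z ∈ 𝒜 k → t ∈ 𝒜 l →
      sgn K l (i + k) • hasc mul α (mul x y) (α z) (α t)
        + sgn K i (j + k) • hasc mul α (mul y t) (α z) (α x)
        + sgn K j (l + k) • hasc mul α (mul t x) (α z) (α y) = 0)
    (i j k : ZMod 2) (w x z : A)
    (hw : w ∈ 𝒜 i) (hx : x ∈ 𝒜 j) (hz : z ∈ 𝒜 k) (y : A) :
    sgn K i (j + k) •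
        (mul (α (α x)) (mul (mul w z) (α y))
          - sgn K j (i + k) • mul (α (mul w z)) (mul (α x) (α y)))
      + sgn K j (k + i) •
        (mul (α (α z)) (mul (mul x w) (α y))
          - sgn K k (j + i) • mul (α (mul x w)) (mul (α z) (α y)))
      + sgn K k (i + j) •
        (mul (α (α w)) (mul (mul z x) (α y))
          - sgn K i (k + j) • mul (α (mul z x)) (mul (α w) (α y))) = 0 :=
  stmt14_general 𝒜 hds mul hbil hgr α hαadd hαeven hcomm hjordan i j k w x z hw hx hz y
end

section
/- In a multiplicative right Hom-alternative superalgebra (A,*,α), with [x,y] = (1/2)(x*y - (-1)^{|x||y|}y*x), super-Jordan product ∘, ⟨x,y,z⟩ = (x∘y)∘α(z) + α(x)∘(y∘z) - (-1)^{|x||y|}α(y)∘(x∘z), and [x,y,z] := ⟨x,y,z⟩ - (-1)^{|x||y|}⟨y,x,z⟩, the identity [x,y,z] = 2[[x,y],α(z)] - (-1)^{|z|(|x|+|y|)}((z*x)*α(y) - α(z)*(x*y)) holds for all homogeneous x,y,z. -/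
/-- The triple product `⟨x,y,z⟩ = (x∘y)∘α(z) + α(x)∘(y∘z) - (-1)^{|x||y|}α(y)∘(x∘z)`
built from the super-Jordan product `∘`, for homogeneous `x,y,z` of degrees `i,j,k`. -/
def hTj (K : Type*) {A : Type*} [Field K] [AddCommGroup A] [Module K A]
    (mul : A → A → A) (α : A → A) (i j k : ZMod 2) (x y z : A) : A :=
  jp K mul (i + j) k (jp K mul i j x y) (α z)
    + jp K mul i (j + k) (α x) (jp K mul j k y z)
    - sgn K i j • jp K mul j (i + k) (α y) (jp K mul i k x z)

/-- The Hom-Bol ternary operation `{x,y,z} = (1/2)(⟨x,y,z⟩ - (-1)^{|x||y|}⟨y,x,z⟩)`. -/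
def tbh (K : Type*) {A : Type*} [Field K] [AddCommGroup A] [Module K A]
    (mul : A → A → A) (α : A → A) (i j k : ZMod 2) (x y z : A) : A :=
  (2 : K)⁻¹ • (hTj K mul α i j k x y z - sgn K i j • hTj K mul α j i k y x z)

/-!
Super-commutativity of `∘` gives `(y∘x)∘α(z) = (-1)^{|x||y|} (x∘y)∘α(z)`, so these terms cancel in
`⟨x,y,z⟩ - (-1)^{|x||y|}⟨y,x,z⟩`, which collapses to `2(α(x)∘(y∘z) - (-1)^{|x||y|} α(y)∘(x∘z))`.
Expanding this and the right-hand side in products, their difference is half of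
`-S(x,y,z) + (-1)^{|x||y|} S(y,x,z) + (-1)^{|z|(|x|+|y|)} S(z,x,y)`, where
`S(a,b,c) = as(a,b,c) + (-1)^{|b||c|} as(a,c,b)` vanishes by right Hom-superalternativity.
-/

lemma sgn_comm (K : Type*) [Field K] (a b : ZMod 2) : sgn K a b = sgn K b a := by
  rw [sgn, sgn, mul_comm]

lemma sgn_mul_self (K : Type*) [Field K] (a b : ZMod 2) : sgn K a b * sgn K a b = 1 := by
  rw [sgn, ← pow_add]
  exact Even.neg_one_pow ⟨_, rfl⟩

lemma sgn_add_left (K : Type*) [Field K] (a b c : ZMod 2) :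
    sgn K (a + b) c = sgn K a c * sgn K b c := by
  rw [sgn, sgn, sgn, ← pow_add, add_mul, ZMod.val_add, ← neg_one_pow_eq_pow_mod_two]

lemma sgn_add_right_s18 (K : Type*) [Field K] (a b c : ZMod 2) :
    sgn K a (b + c) = sgn K a b * sgn K a c := by
  rw [sgn_comm, sgn_add_left, sgn_comm K b, sgn_comm K c]

lemma sub_smul_eq_two_smul_of_mul_self_eq_one {R M : Type*} [CommRing R] [AddCommGroup M]
    [Module R M] {ε : R} (hε : ε * ε = 1) (a b c : M) :
    (a + b - ε • c) - ε • (ε • a + c - ε • b) = (2 : R) • (b - ε • c) := by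
  linear_combination (norm := module) hε • (b - a)

section

variable {K A : Type*} [Field K] [AddCommGroup A] [Module K A]

lemma IsBilin.exists_linearMap₂ {f : A → A → A} (h : IsBilin K f) :
    ∃ B : A →ₗ[K] A →ₗ[K] A, f = fun x y => B x y :=
  ⟨LinearMap.mk₂ K f h.2.1 h.1 h.2.2.2 h.2.2.1, rfl⟩

lemma jp_comm (mul : A → A → A) (i j : ZMod 2) (x y : A) :
    jp K mul j i y x = sgn K i j • jp K mul i j x y := by
  rw [jp, jp, sgn_comm K j i]
  linear_combination (norm := module) sgn_mul_self K i j • (-(2 : K)⁻¹ • mul y x)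

lemma jp_smul_left (B : A →ₗ[K] A →ₗ[K] A) (i j : ZMod 2) (c : K) (x y : A) :
    jp K (fun a b => B a b) i j (c • x) y = c • jp K (fun a b => B a b) i j x y := by
  simp only [jp, map_smul, LinearMap.smul_apply]
  module

lemma hTj_sub_sgn_smul_hTj_swap (B : A →ₗ[K] A →ₗ[K] A) (α : A → A) (i j k : ZMod 2)
    (x y z : A) :
    hTj K (fun a b => B a b) α i j k x y z - sgn K i j • hTj K (fun a b => B a b) α j i k y x z
      = (2 : K) • (jp K (fun a b => B a b) i (j + k) (α x) (jp K (fun a b => B a b) j k y z)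
        - sgn K i j • jp K (fun a b => B a b) j (i + k) (α y) (jp K (fun a b => B a b) i k x z)) := by
  rw [hTj, hTj, add_comm j i, jp_comm _ i j x y, jp_smul_left, sgn_comm K j i]
  exact sub_smul_eq_two_smul_of_mul_self_eq_one (sgn_mul_self K i j) _ _ _

lemma two_smul_jp_sub_eq_br_br_sub_hasc (B : A →ₗ[K] A →ₗ[K] A) (h2 : (2 : K) ≠ 0)
    (α : A → A) (i j k : ZMod 2) (x y z : A)
    (hxyz : hasc (fun a b => B a b) α x y z = -sgn K j k • hasc (fun a b => B a b) α x z y)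
    (hyxz : hasc (fun a b => B a b) α y x z = -sgn K i k • hasc (fun a b => B a b) α y z x)
    (hzxy : hasc (fun a b => B a b) α z x y = -sgn K i j • hasc (fun a b => B a b) α z y x) :
    (2 : K) • (jp K (fun a b => B a b) i (j + k) (α x) (jp K (fun a b => B a b) j k y z)
      - sgn K i j • jp K (fun a b => B a b) j (i + k) (α y) (jp K (fun a b => B a b) i k x z))
      = (2 : K) • br K (fun a b => B a b) (i + j) k (br K (fun a b => B a b) i j x y) (α z)
        - sgn K k (i + j) • hasc (fun a b => B a b) α z x y := by
  have hp := sgn_mul_self K i j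
  simp only [hasc] at hxyz hyxz hzxy ⊢
  simp only [jp, br, map_add, map_sub, map_smul, LinearMap.add_apply, LinearMap.sub_apply,
    LinearMap.smul_apply, sgn_add_left, sgn_add_right_s18, sgn_comm K k i, sgn_comm K k j,
    sgn_comm K j i]
  linear_combination (norm := match_scalars <;> grind)
    (2 : K)⁻¹ • (-hxyz) + ((2 : K)⁻¹ * sgn K i j) • hyxz
      + ((2 : K)⁻¹ * sgn K j k * sgn K i k) • hzxy

end

theorem stmt18_general {K A : Type*} [Field K] [AddCommGroup A] [Module K A]
    (h2 : (2 : K) ≠ 0)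
    (𝒜 : ZMod 2 → Submodule K A)
    (mul : A → A → A) (hbil : IsBilin K mul)
    (α : A → A)
    (halt : ∀ (i j k : ZMod 2) (x y z : A), x ∈ 𝒜 i → y ∈ 𝒜 j → z ∈ 𝒜 k →
      hasc mul α x y z = (-(sgn K j k)) • hasc mul α x z y)
    (i j k : ZMod 2) (x y z : A)
    (hx : x ∈ 𝒜 i) (hy : y ∈ 𝒜 j) (hz : z ∈ 𝒜 k) :
    hTj K mul α i j k x y z - sgn K i j • hTj K mul α j i k y x z
      = (2 : K) • br K mul (i + j) k (br K mul i j x y) (α z)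
        - sgn K k (i + j) • (mul (mul z x) (α y) - mul (α z) (mul x y)) := by
  obtain ⟨B, rfl⟩ := hbil.exists_linearMap₂
  rw [hTj_sub_sgn_smul_hTj_swap]
  exact two_smul_jp_sub_eq_br_br_sub_hasc B h2 α i j k x y z (halt i j k x y z hx hy hz)
    (halt j i k y x z hy hx hz) (halt k i j z x y hz hx hy)

/-- Identity (7.10): `[x,y,z] = 2[[x,y],α(z)] - (-1)^{|z|(|x|+|y|)} as(z,x,y)` in a
multiplicative right Hom-alternative superalgebra. -/
theorem stmt18 {K A : Type*} [Field K] [AddCommGroup A] [Module K A]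
    (h2 : (2 : K) ≠ 0) (h3 : (3 : K) ≠ 0)
    (𝒜 : ZMod 2 → Submodule K A) (hds : DirectSum.IsInternal 𝒜)
    (mul : A → A → A) (hbil : IsBilin K mul)
    (hgr : ∀ (i j : ZMod 2) (x y : A), x ∈ 𝒜 i → y ∈ 𝒜 j → mul x y ∈ 𝒜 (i + j))
    (α : A → A)
    (hαsmul : ∀ (c : K) (x : A), α (c • x) = c • α x)
    (hαadd : ∀ x y : A, α (x + y) = α x + α y)
    (hαeven : ∀ (i : ZMod 2) (x : A), x ∈ 𝒜 i → α x ∈ 𝒜 i)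
    (hαmul : ∀ x y : A, α (mul x y) = mul (α x) (α y))
    (halt : ∀ (i j k : ZMod 2) (x y z : A), x ∈ 𝒜 i → y ∈ 𝒜 j → z ∈ 𝒜 k →
      hasc mul α x y z = (-(sgn K j k)) • hasc mul α x z y)
    (i j k : ZMod 2) (x y z : A)
    (hx : x ∈ 𝒜 i) (hy : y ∈ 𝒜 j) (hz : z ∈ 𝒜 k) :
    hTj K mul α i j k x y z - sgn K i j • hTj K mul α j i k y x z
      = (2 : K) • br K mul (i + j) k (br K mul i j x y) (α z)
        - sgn K k (i + j) • (mul (mul z x) (α y) - mul (α z) (mul x y)) :=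
  stmt18_general h2 𝒜 mul hbil α halt i j k x y z hx hy hz
end
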